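/- Let n, m be positive integers, let A ∈ ℝ^{n×n}, C ∈ ℝ^{p×n}, L ∈ ℝ^{n×p}, Cq ∈ ℝ^{q×n}, and set M := A + LC. Let P, Q ∈ ℝ^{n×n} be symmetric positive definite, let L̂φ ≥ Lφ > 0, and assume: (i) MᵀPM − P + Q + L̂φ²·CqᵀCq ⪯ 0; and (ii) 4·p̄⋆²·L̂φ²·λmax(P) + 8·p̄⋆·L̂φ·‖PM‖_F ≤ λmin(Q). Let ψ̃ : ℝⁿ → ℝᵐ satisfy ‖ψ̃(x)‖ ≤ φ̄ and ‖ψ̃(x′) − ψ̃(x)‖ ≤ Lφ·‖x′ − x‖ for all x, x′ ∈ ℝⁿ, and let p⋆, p ∈ ℝ^{m×n} with operator norm ‖p⋆‖ ≤ p̄⋆; set eᵖ := p − p⋆. Let x, e ∈ ℝⁿ and define e⁺ := M e + pᵀψ̃(x + e) − p⋆ᵀψ̃(x). If ‖eᵖ‖ ≤ (λmin(Q) / (8·φ̄·(λmax(P)·L̂φ·p̄⋆ + ‖PM‖_F)))·‖e‖, then (e⁺)ᵀP e⁺ − eᵀP e ≤ −(λmin(Q)/2 + L̂φ²·λmin(CqᵀCq))·‖e‖²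 + φ̄²·λmax(P)·‖eᵖ‖². -/

import Mathlib

/-!
Write `e⁺ = M e + d` with `d = p⋆ᵀ (ψ̃ (x + e) - ψ̃ x) + eᵖᵀ ψ̃ (x + e)`, so that
`‖d‖ ≤ p̄⋆ L̂φ ‖e‖ + φ̄ ‖eᵖ‖`. Expanding `V (e⁺) = (M e)ᵀ P (M e) + 2 ⟪P M e, d⟫ + dᵀ P d`, the
Lyapunov inequality turns the first term into `V e - (λmin Q + L̂φ² λmin (Cqᵀ Cq)) ‖e‖²`, while the
other two are at most `2 ‖P M‖_F ‖e‖ ‖d‖ + λmax P ‖d‖²`. Inserting the bound on `‖d‖`, the gain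
condition absorbs the `‖e‖²` part of this into `λmin Q / 4 ‖e‖²` and the cone condition absorbs the
mixed `‖e‖ ‖eᵖ‖` part into another `λmin Q / 4 ‖e‖²`, leaving `φ̄² λmax P ‖eᵖ‖²`.
-/

open Matrix MeasureTheory Filter

noncomputable def lamMin {n : ℕ} (A : Matrix (Fin n) (Fin n) ℝ) : ℝ :=
  sInf (spectrum ℝ A)

noncomputable def lamMax {n : ℕ} (A : Matrix (Fin n) (Fin n) ℝ) : ℝ :=
  sSup (spectrum ℝ A)

noncomputable def frobNorm {m n : ℕ} (M : Matrix (Fin m) (Fin n) ℝ) : ℝ :=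
  Real.sqrt (∑ i, ∑ j, (M i j) ^ 2)

noncomputable def mulVecE {m n : ℕ} (M : Matrix (Fin m) (Fin n) ℝ)
    (x : EuclideanSpace ℝ (Fin n)) : EuclideanSpace ℝ (Fin m) :=
  Matrix.toEuclideanLin M x

noncomputable def quadForm {n : ℕ} (P : Matrix (Fin n) (Fin n) ℝ)
    (x : EuclideanSpace ℝ (Fin n)) : ℝ :=
  inner ℝ x (mulVecE P x)

noncomputable def opNorm {m n : ℕ} (p : Matrix (Fin m) (Fin n) ℝ) : ℝ :=
  ‖LinearMap.toContinuousLinearMap (Matrix.toEuclideanLin p)‖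

section MatrixAction

variable {l m n : ℕ}

lemma mulVecE_apply (A : Matrix (Fin m) (Fin n) ℝ) (x : EuclideanSpace ℝ (Fin n)) (i : Fin m) :
    mulVecE A x i = (A *ᵥ ⇑x) i := rfl

lemma mulVecE_mul (A : Matrix (Fin l) (Fin m) ℝ) (B : Matrix (Fin m) (Fin n) ℝ)
    (x : EuclideanSpace ℝ (Fin n)) : mulVecE (A * B) x = mulVecE A (mulVecE B x) := by
  ext i
  exact congrFun (mulVec_mulVec x.ofLp A B).symm i

lemma mulVecE_sub_left (A B : Matrix (Fin m) (Fin n) ℝ) (x : EuclideanSpace ℝ (Fin n)) :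
    mulVecE (A - B) x = mulVecE A x - mulVecE B x := by
  simp [mulVecE]

lemma mulVecE_sub_right (A : Matrix (Fin m) (Fin n) ℝ) (x y : EuclideanSpace ℝ (Fin n)) :
    mulVecE A (x - y) = mulVecE A x - mulVecE A y :=
  map_sub _ x y

lemma toEuclideanLin_transpose (A : Matrix (Fin m) (Fin n) ℝ) :
    toEuclideanLin Aᵀ = LinearMap.adjoint (toEuclideanLin A) := by
  rw [← conjTranspose_eq_transpose_of_trivial, toEuclideanLin_conjTranspose_eq_adjoint]

lemma inner_mulVecE_left (A : Matrix (Fin m) (Fin n) ℝ) (x : EuclideanSpace ℝ (Fin n))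
    (y : EuclideanSpace ℝ (Fin m)) :
    inner ℝ (mulVecE A x) y = inner ℝ x (mulVecE Aᵀ y) := by
  rw [mulVecE, mulVecE, toEuclideanLin_transpose, LinearMap.adjoint_inner_right]

lemma opNorm_transpose (A : Matrix (Fin m) (Fin n) ℝ) : opNorm Aᵀ = opNorm A := by
  rw [opNorm, toEuclideanLin_transpose, LinearMap.adjoint_toContinuousLinearMap]
  exact ContinuousLinearMap.adjoint.norm_map _

lemma norm_mulVecE_le_opNorm (A : Matrix (Fin m) (Fin n) ℝ) (x : EuclideanSpace ℝ (Fin n)) :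
    ‖mulVecE A x‖ ≤ opNorm A * ‖x‖ :=
  (LinearMap.toContinuousLinearMap (toEuclideanLin A)).le_opNorm x

lemma norm_mulVecE_le_frobNorm (A : Matrix (Fin m) (Fin n) ℝ) (x : EuclideanSpace ℝ (Fin n)) :
    ‖mulVecE A x‖ ≤ frobNorm A * ‖x‖ := by
  rw [EuclideanSpace.norm_eq, EuclideanSpace.norm_eq, frobNorm, ← Real.sqrt_mul (by positivity)]
  refine Real.sqrt_le_sqrt ?_
  simp only [Real.norm_eq_abs, sq_abs, mulVecE_apply, mulVec, dotProduct]
  rw [Finset.sum_mul]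
  exact Finset.sum_le_sum fun i _ => Finset.sum_mul_sq_le_sq_mul_sq _ _ _

end MatrixAction

section QuadForm

variable {m n : ℕ}

lemma quadForm_add (S T : Matrix (Fin n) (Fin n) ℝ) (x : EuclideanSpace ℝ (Fin n)) :
    quadForm (S + T) x = quadForm S x + quadForm T x := by
  simp [quadForm, mulVecE, inner_add_right]

lemma quadForm_sub (S T : Matrix (Fin n) (Fin n) ℝ) (x : EuclideanSpace ℝ (Fin n)) :
    quadForm (S - T) x = quadForm S x - quadForm T x := by
  simp [quadForm, mulVecE, inner_sub_right]

lemma quadForm_neg (S : Matrix (Fin n) (Fin n) ℝ) (x : EuclideanSpace ℝ (Fin n)) :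
    quadForm (-S) x = -quadForm S x := by
  simp [quadForm, mulVecE, inner_neg_right]

lemma quadForm_smul (c : ℝ) (S : Matrix (Fin n) (Fin n) ℝ) (x : EuclideanSpace ℝ (Fin n)) :
    quadForm (c • S) x = c * quadForm S x := by
  simp [quadForm, mulVecE, inner_smul_right]

lemma quadForm_one (x : EuclideanSpace ℝ (Fin n)) : quadForm 1 x = ‖x‖ ^ 2 := by
  simp [quadForm, mulVecE]

lemma quadForm_nonneg {S : Matrix (Fin n) (Fin n) ℝ} (hS : S.PosSemidef)
    (x : EuclideanSpace ℝ (Fin n)) : 0 ≤ quadForm S x := by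
  simpa [quadForm, mulVecE, PiLp.inner_apply, dotProduct, mul_comm] using
    hS.dotProduct_mulVec_nonneg (x : Fin n → ℝ)

lemma quadForm_transpose_mul_mul (B : Matrix (Fin m) (Fin n) ℝ) (P : Matrix (Fin m) (Fin m) ℝ)
    (x : EuclideanSpace ℝ (Fin n)) : quadForm (Bᵀ * P * B) x = quadForm P (mulVecE B x) := by
  rw [quadForm, quadForm, mulVecE_mul, mulVecE_mul, ← inner_mulVecE_left]

lemma quadForm_map_add {P : Matrix (Fin n) (Fin n) ℝ} (hP : P.IsHermitian)
    (u v : EuclideanSpace ℝ (Fin n)) :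
    quadForm P (u + v) = quadForm P u + 2 * inner ℝ (mulVecE P u) v + quadForm P v := by
  have hPt : Pᵀ = P := by rw [← conjTranspose_eq_transpose_of_trivial]; exact hP
  have hsymm : inner ℝ u (mulVecE P v) = inner ℝ (mulVecE P u) v := by
    rw [inner_mulVecE_left, hPt]
  simp only [quadForm, mulVecE, map_add, inner_add_left, inner_add_right] at hsymm ⊢
  rw [hsymm, real_inner_comm v]
  ring

end QuadForm

section Spectrum

variable {n : ℕ}

lemma posSemidef_sub_smul_one {S : Matrix (Fin n) (Fin n) ℝ} (hS : S.IsHermitian) {c : ℝ}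
    (hc : ∀ μ ∈ spectrum ℝ S, c ≤ μ) : (S - c • 1).PosSemidef := by
  have hshift : S - c • 1 = -algebraMap ℝ _ c + S := by
    rw [Algebra.algebraMap_eq_smul_one]; abel
  have hherm : (S - c • 1).IsHermitian := hS.sub (isHermitian_one.smul (IsSelfAdjoint.all c))
  refine hherm.posSemidef_iff_eigenvalues_nonneg.mpr fun i => ?_
  have hmem : hherm.eigenvalues i + c ∈ spectrum ℝ S :=
    spectrum.add_mem_iff.mpr (hshift ▸ hherm.eigenvalues_mem_spectrum_real i)
  show (0 : ℝ) ≤ _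
  linarith [hc _ hmem]

lemma mul_sq_norm_le_quadForm {S : Matrix (Fin n) (Fin n) ℝ} (hS : S.IsHermitian) {c : ℝ}
    (hc : ∀ μ ∈ spectrum ℝ S, c ≤ μ) (x : EuclideanSpace ℝ (Fin n)) :
    c * ‖x‖ ^ 2 ≤ quadForm S x := by
  have h := quadForm_nonneg (posSemidef_sub_smul_one hS hc) x
  rw [quadForm_sub, quadForm_smul, quadForm_one] at h
  linarith

lemma lamMin_mul_sq_norm_le_quadForm {S : Matrix (Fin n) (Fin n) ℝ} (hS : S.IsHermitian)
    (x : EuclideanSpace ℝ (Fin n)) : lamMin S * ‖x‖ ^ 2 ≤ quadForm S x :=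
  mul_sq_norm_le_quadForm hS (fun _ hμ => csInf_le finite_real_spectrum.bddBelow hμ) x

lemma quadForm_le_lamMax_mul_sq_norm {S : Matrix (Fin n) (Fin n) ℝ} (hS : S.IsHermitian)
    (x : EuclideanSpace ℝ (Fin n)) : quadForm S x ≤ lamMax S * ‖x‖ ^ 2 := by
  have hneg : ∀ μ ∈ spectrum ℝ (-S), -lamMax S ≤ μ := by
    intro μ hμ
    rw [← spectrum.neg_eq, Set.mem_neg] at hμ
    have h : -μ ≤ lamMax S := le_csSup finite_real_spectrum.bddAbove hμ
    linarith
  have h := mul_sq_norm_le_quadForm hS.neg hneg x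
  rw [quadForm_neg] at h
  linarith

lemma lamMax_pos (hn : 0 < n) {S : Matrix (Fin n) (Fin n) ℝ} (hS : S.PosDef) : 0 < lamMax S := by
  have hmem : hS.1.eigenvalues ⟨0, hn⟩ ∈ spectrum ℝ S := hS.1.eigenvalues_mem_spectrum_real _
  exact (hS.eigenvalues_pos _).trans_le (le_csSup finite_real_spectrum.bddAbove hmem)

end Spectrum

lemma norm_learning_mismatch_le {m n : ℕ} {ψ : EuclideanSpace ℝ (Fin n) → EuclideanSpace ℝ (Fin m)}
    {phibar K pbar : ℝ} (hbdd : ∀ x, ‖ψ x‖ ≤ phibar) (hlip : ∀ x x', ‖ψ x' - ψ x‖ ≤ K * ‖x' - x‖)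
    {pstar p' : Matrix (Fin m) (Fin n) ℝ} (hpstar : opNorm pstar ≤ pbar)
    (x e : EuclideanSpace ℝ (Fin n)) :
    ‖mulVecE pstarᵀ (ψ (x + e) - ψ x) + mulVecE (p' - pstar)ᵀ (ψ (x + e))‖
      ≤ pbar * K * ‖e‖ + phibar * opNorm (p' - pstar) := by
  have hlip_e : ‖ψ (x + e) - ψ x‖ ≤ K * ‖e‖ := by simpa using hlip x (x + e)
  have hpbar : 0 ≤ pbar := (norm_nonneg _).trans hpstar
  calc _ ≤ ‖mulVecE pstarᵀ (ψ (x + e) - ψ x)‖ + ‖mulVecE (p' - pstar)ᵀ (ψ (x + e))‖ :=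
        norm_add_le _ _
    _ ≤ opNorm pstar * ‖ψ (x + e) - ψ x‖ + opNorm (p' - pstar) * ‖ψ (x + e)‖ := by
        rw [← opNorm_transpose pstar, ← opNorm_transpose (p' - pstar)]
        exact add_le_add (norm_mulVecE_le_opNorm _ _) (norm_mulVecE_le_opNorm _ _)
    _ ≤ pbar * (K * ‖e‖) + opNorm (p' - pstar) * phibar := by
        gcongr
        · exact norm_nonneg _
        · exact hbdd _
    _ = pbar * K * ‖e‖ + phibar * opNorm (p' - pstar) := by ring

lemma cone_estimate {a b F H pbar phibar s r D : ℝ} (hb : 0 < b) (hF : 0 ≤ F) (hH : 0 < H)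
    (hpbar : 0 < pbar) (hphibar : 0 < phibar) (hs : 0 ≤ s) (hD : 0 ≤ D)
    (hgain : 4 * pbar ^ 2 * H ^ 2 * b + 8 * pbar * H * F ≤ a)
    (hcone : r ≤ a / (8 * phibar * (b * H * pbar + F)) * s)
    (hDle : D ≤ pbar * H * s + phibar * r) :
    2 * F * s * D + b * D ^ 2 ≤ a / 2 * s ^ 2 + phibar ^ 2 * b * r ^ 2 := by
  set K := pbar * H * s + phibar * r
  have hden : 0 < 8 * phibar * (b * H * pbar + F) := by positivity
  have hcone' : 8 * phibar * (b * H * pbar + F) * r ≤ a * s := by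
    calc 8 * phibar * (b * H * pbar + F) * r
        ≤ 8 * phibar * (b * H * pbar + F) * (a / (8 * phibar * (b * H * pbar + F)) * s) := by
          gcongr
      _ = a * s := by field_simp
  have hmono : 2 * F * s * D + b * D ^ 2 ≤ 2 * F * s * K + b * K ^ 2 := by
    gcongr
  have hexpand : 2 * F * s * K + b * K ^ 2 = (2 * F * pbar * H + b * pbar ^ 2 * H ^ 2) * s ^ 2
      + 2 * phibar * (F + b * pbar * H) * r * s + phibar ^ 2 * b * r ^ 2 := by ring
  linarith [mul_le_mul_of_nonneg_right hcone' hs, mul_le_mul_of_nonneg_right hgain (sq_nonneg s)]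

theorem stmt_6_general {n m q : ℕ} (hn : 0 < n)
    (Cq : Matrix (Fin q) (Fin n) ℝ)
    (M : Matrix (Fin n) (Fin n) ℝ)
    (P Q : Matrix (Fin n) (Fin n) ℝ) (hP : P.PosDef) (hQ : Q.PosDef)
    (phibar Lphi Lhat pbar : ℝ)
    (hphibar : 0 < phibar) (hLphi : 0 < Lphi) (hLhat : Lphi ≤ Lhat) (hpbar : 0 < pbar)
    (hLyap : (-(Mᵀ * P * M - P + Q + Lhat ^ 2 • (Cqᵀ * Cq))).PosSemidef)
    (hgain : 4 * pbar ^ 2 * Lhat ^ 2 * lamMax P + 8 * pbar * Lhat * frobNorm (P * M) ≤ lamMin Q)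
    (ψ : EuclideanSpace ℝ (Fin n) → EuclideanSpace ℝ (Fin m))
    (hbdd : ∀ x, ‖ψ x‖ ≤ phibar)
    (hlip : ∀ x x', ‖ψ x' - ψ x‖ ≤ Lphi * ‖x' - x‖)
    (pstar p' : Matrix (Fin m) (Fin n) ℝ)
    (hpstar : opNorm pstar ≤ pbar)
    (x e eplus : EuclideanSpace ℝ (Fin n))
    (heplus : eplus = mulVecE M e + mulVecE p'ᵀ (ψ (x + e)) - mulVecE pstarᵀ (ψ x))
    (hcone : opNorm (p' - pstar) ≤
      (lamMin Q / (8 * phibar * (lamMax P * Lhat * pbar + frobNorm (P * M)))) * ‖e‖) :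
    quadForm P eplus - quadForm P e ≤
      -(lamMin Q / 2 + Lhat ^ 2 * lamMin (Cqᵀ * Cq)) * ‖e‖ ^ 2
        + phibar ^ 2 * lamMax P * (opNorm (p' - pstar)) ^ 2 := by
  set d := mulVecE pstarᵀ (ψ (x + e) - ψ x) + mulVecE (p' - pstar)ᵀ (ψ (x + e)) with hd
  have hsplit : eplus = mulVecE M e + d := by
    rw [heplus, hd, transpose_sub, mulVecE_sub_left, mulVecE_sub_right]; abel
  have hLhat_pos : 0 < Lhat := hLphi.trans_le hLhat
  have hlip_hat : ∀ x x', ‖ψ x' - ψ x‖ ≤ Lhat * ‖x' - x‖ := fun x x' =>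
    (hlip x x').trans (mul_le_mul_of_nonneg_right hLhat (norm_nonneg _))
  have hd_le : ‖d‖ ≤ pbar * Lhat * ‖e‖ + phibar * opNorm (p' - pstar) :=
    norm_learning_mismatch_le hbdd hlip_hat hpstar x e
  have hcross : inner ℝ (mulVecE P (mulVecE M e)) d ≤ frobNorm (P * M) * ‖e‖ * ‖d‖ := by
    rw [← mulVecE_mul]
    exact (real_inner_le_norm _ _).trans
      (mul_le_mul_of_nonneg_right (norm_mulVecE_le_frobNorm _ _) (norm_nonneg _))
  have hdecay := quadForm_nonneg hLyap e
  simp only [quadForm_neg, quadForm_add, quadForm_sub, quadForm_smul,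
    quadForm_transpose_mul_mul] at hdecay
  have hQe := lamMin_mul_sq_norm_le_quadForm hQ.1 e
  have hCq : (Cqᵀ * Cq).IsHermitian :=
    conjTranspose_eq_transpose_of_trivial Cq ▸ isHermitian_conjTranspose_mul_self Cq
  have hCqe := mul_le_mul_of_nonneg_left (lamMin_mul_sq_norm_le_quadForm hCq e) (sq_nonneg Lhat)
  have hPd := quadForm_le_lamMax_mul_sq_norm hP.1 d
  have hscalar := cone_estimate (F := frobNorm (P * M)) (lamMax_pos hn hP)
    (Real.sqrt_nonneg _) hLhat_pos hpbar hphibar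
    (norm_nonneg e) (norm_nonneg d) hgain hcone hd_le
  rw [hsplit, quadForm_map_add hP.1]
  linarith

/-- Theorem 3 of the paper (observer gain redesign): improved Lyapunov decrease rate. -/
theorem stmt_6 {n m p q : ℕ} (hn : 0 < n) (hm : 0 < m)
    (A : Matrix (Fin n) (Fin n) ℝ) (C : Matrix (Fin p) (Fin n) ℝ)
    (L : Matrix (Fin n) (Fin p) ℝ) (Cq : Matrix (Fin q) (Fin n) ℝ)
    (M : Matrix (Fin n) (Fin n) ℝ) (hM : M = A + L * C)
    (P Q : Matrix (Fin n) (Fin n) ℝ) (hP : P.PosDef) (hQ : Q.PosDef)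
    (phibar Lphi Lhat pbar : ℝ)
    (hphibar : 0 < phibar) (hLphi : 0 < Lphi) (hLhat : Lphi ≤ Lhat) (hpbar : 0 < pbar)
    (hLyap : (-(Mᵀ * P * M - P + Q + Lhat ^ 2 • (Cqᵀ * Cq))).PosSemidef)
    (hgain : 4 * pbar ^ 2 * Lhat ^ 2 * lamMax P + 8 * pbar * Lhat * frobNorm (P * M) ≤ lamMin Q)
    (ψ : EuclideanSpace ℝ (Fin n) → EuclideanSpace ℝ (Fin m))
    (hbdd : ∀ x, ‖ψ x‖ ≤ phibar)
    (hlip : ∀ x x', ‖ψ x' - ψ x‖ ≤ Lphi * ‖x' - x‖)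
    (pstar p' : Matrix (Fin m) (Fin n) ℝ)
    (hpstar : opNorm pstar ≤ pbar)
    (x e eplus : EuclideanSpace ℝ (Fin n))
    (heplus : eplus = mulVecE M e + mulVecE p'ᵀ (ψ (x + e)) - mulVecE pstarᵀ (ψ x))
    (hcone : opNorm (p' - pstar) ≤
      (lamMin Q / (8 * phibar * (lamMax P * Lhat * pbar + frobNorm (P * M)))) * ‖e‖) :
    quadForm P eplus - quadForm P e ≤
      -(lamMin Q / 2 + Lhat ^ 2 * lamMin (Cqᵀ * Cq)) * ‖e‖ ^ 2
        + phibar ^ 2 * lamMax P * (opNorm (p' - pstar)) ^ 2 :=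
  stmt_6_general hn Cq M P Q hP hQ phibar Lphi Lhat pbar hphibar hLphi hLhat hpbar hLyap hgain ψ
    hbdd hlip pstar p' hpstar x e eplus heplus hcone
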